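/- If α_1, …, α_J ∈ (-1,1) are distinct and σ_1, …, σ_J > 0, then the J×J matrix with (j,k) entry (σ_j²/(1-α_j²)) · (2/(1-α_j α_k) - 1) · (σ_k²/(1-α_k²)) is positive definite. -/

import Mathlib

/-!
Put `c_j = σ_j² / (1 - α_j²)`; the matrix is `D K D` with `D = diag c` invertible and
`K_jk = 2 / (1 - α_j α_k) - 1`. Expanding `1 / (1 - α_j α_k)` as a geometric series,
`yᵀ K y = 2 ∑_{ℓ ≥ 0} s_ℓ² - s_0² = s_0² + 2 ∑_{ℓ ≥ 1} s_ℓ²` with power sums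
`s_ℓ = ∑_j y_j α_j^ℓ`, and for distinct `α_j` these cannot all vanish unless `y = 0`
(Vandermonde).
-/

open Matrix Finset

lemma hasSum_sq_sum_mul_pow {ι : Type*} [Fintype ι] {a : ι → ℝ} (ha : ∀ j, |a j| < 1)
    (y : ι → ℝ) :
    HasSum (fun ℓ : ℕ => (∑ j, y j * a j ^ ℓ) ^ 2) (∑ j, ∑ k, y j * y k / (1 - a j * a k)) := by
  have hgeom : ∀ j k, HasSum (fun ℓ : ℕ => y j * y k * (a j * a k) ^ ℓ)
      (y j * y k / (1 - a j * a k)) := by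
    intro j k
    have hjk : |a j * a k| < 1 := by
      rw [abs_mul]
      exact mul_lt_one_of_nonneg_of_lt_one_left (abs_nonneg _) (ha j) (ha k).le
    simpa only [div_eq_mul_inv] using (hasSum_geometric_of_abs_lt_one hjk).mul_left (y j * y k)
  convert hasSum_sum fun j _ => hasSum_sum fun k _ => hgeom j k using 1
  funext ℓ
  rw [sq, sum_mul_sum]
  exact sum_congr rfl fun j _ => sum_congr rfl fun k _ => by ring

theorem posDef_two_div_one_sub_mul_sub_one {n : ℕ} {a : Fin n → ℝ} (ha : ∀ j, |a j| < 1)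
    (hinj : Function.Injective a) :
    (Matrix.of fun j k => 2 / (1 - a j * a k) - 1).PosDef := by
  refine .of_dotProduct_mulVec_pos ?_ fun y hy => ?_
  · ext j k
    simp [mul_comm]
  set s : ℕ → ℝ := fun ℓ => ∑ j, y j * a j ^ ℓ
  have hS := hasSum_sq_sum_mul_pow ha y
  set S := ∑ j, ∑ k, y j * y k / (1 - a j * a k)
  have hs0 : s 0 ^ 2 = ∑ j, ∑ k, y j * y k := by
    simp only [s, pow_zero, mul_one, sq, sum_mul_sum]
  have hquad : star y ⬝ᵥ (of (fun j k => 2 / (1 - a j * a k) - 1) *ᵥ y) = 2 * S - s 0 ^ 2 := by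
    simp only [hs0, S, dotProduct, mulVec, star_trivial, of_apply, mul_sum, ← sum_sub_distrib]
    exact sum_congr rfl fun j _ => sum_congr rfl fun k _ => by ring
  obtain ⟨ℓ, hℓ⟩ : ∃ ℓ, s ℓ ≠ 0 := by
    by_contra! h
    exact hy (eq_zero_of_forall_pow_sum_mul_pow_eq_zero hinj fun i => h i)
  have hS_pos : 0 < S :=
    hasSum_lt (f := 0) (i := ℓ) (fun _ => sq_nonneg _) (sq_pos_of_ne_zero hℓ) hasSum_zero hS
  have hs0_le : s 0 ^ 2 ≤ S := le_hasSum hS 0 fun _ _ => sq_nonneg _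
  rw [hquad]
  linarith

/-- The Gram matrix of AR(1) spectral densities, with `(j,k)` entry
`(σ_j²/(1-α_j²)) · (2/(1-α_j α_k) - 1) · (σ_k²/(1-α_k²))`, is positive definite
whenever the `α_j ∈ (-1,1)` are distinct and the `σ_j` are positive. -/
theorem ar1_gram_posDef (J : ℕ) (α σ : Fin J → ℝ)
    (hα : ∀ j, α j ∈ Set.Ioo (-1 : ℝ) 1)
    (hinj : Function.Injective α)
    (hσ : ∀ j, 0 < σ j) :
    (Matrix.of fun j k : Fin J =>
      (σ j ^ 2 / (1 - α j ^ 2)) * (2 / (1 - α j * α k) - 1) *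
        (σ k ^ 2 / (1 - α k ^ 2))).PosDef := by
  have hα_abs : ∀ j, |α j| < 1 := fun j => abs_lt.2 (hα j)
  set c : Fin J → ℝ := fun j => σ j ^ 2 / (1 - α j ^ 2)
  have hc : ∀ j, c j ≠ 0 := fun j =>
    (div_pos (pow_pos (hσ j) 2) (sub_pos.2 (sq_lt_one_iff_abs_lt_one _ |>.2 (hα_abs j)))).ne'
  have hfactor : (Matrix.of fun j k => c j * (2 / (1 - α j * α k) - 1) * c k) =
      (diagonal c)ᴴ * of (fun j k => 2 / (1 - α j * α k) - 1) * diagonal c := by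
    ext j k
    simp [diagonal_mul, mul_diagonal]
  rw [hfactor]
  exact (posDef_two_div_one_sub_mul_sub_one hα_abs hinj).conjTranspose_mul_mul_same
    (mulVec_injective_of_isUnit (isUnit_diagonal.2 (Pi.isUnit_iff.2 fun j => (hc j).isUnit)))
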